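/- arXiv:1807.06130 — 4 statements merged into one kernel-verified Lean document; each statement's English description precedes it below -/
import Mathlib

section
/- The function γ(t) = (1/(2π^{3/2})) ∑_{n=0}^∞ (4^n/n!) Γ(n/2 + 1/4)² (t - 1/2)^n satisfies the differential equation t(1-t)γ''(t) + (1-2t)γ'(t) - (1/4)γ(t) = 0 on its disk of convergence |t - 1/2| < 1/2. -/
/-!
With `x = t - 1/2` one has `t (1 - t) = 1/4 - x²` and `1 - 2t = -2x`, so for `f = ∑ cₙ xⁿ` the
left-hand side of the equation is the power series with coefficients
`((n + 2)(n + 1) c_{n+2} - (2n + 1)² cₙ) / 4`. For the coefficients of `γ` these vanish by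
`Γ(s + 1) = s Γ(s)` at `s = n/2 + 1/4`. The same recurrence gives `c_{n+2} ≤ 4 cₙ`, so the series
converges for `|x| < 1/2`, where it may be differentiated termwise.
-/

open Real

/-- `γ(t) = (1/(2π^{3/2})) ∑ₙ (4ⁿ/n!) Γ(n/2+1/4)² (t-1/2)ⁿ`. -/
noncomputable def gammaFun : ℝ → ℝ :=
  fun t => (1 / (2 * Real.pi ^ ((3 : ℝ) / 2))) *
    ∑' n : ℕ, ((4 : ℝ) ^ n / (Nat.factorial n : ℝ)) * (Real.Gamma ((n : ℝ) / 2 + 1 / 4)) ^ 2 * (t - 1 / 2) ^ n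

open FormalMultilinearSeries
open scoped ENNReal

section PowerSeries

variable {𝕜 : Type*} [NontriviallyNormedField 𝕜] {f : 𝕜 → 𝕜} {c : ℕ → 𝕜} {x : 𝕜} {r : ℝ≥0∞}

theorem HasFPowerSeriesOnBall.hasSum_ofScalars (hf : HasFPowerSeriesOnBall f (ofScalars 𝕜 c) x r)
    {t : 𝕜} (ht : t ∈ Metric.eball x r) : HasSum (fun n => c n * (t - x) ^ n) (f t) := by
  have hmem : t - x ∈ Metric.eball (0 : 𝕜) r := by simpa [edist_eq_enorm_sub] using ht
  simpa [ofScalars_apply_eq, mul_comm] using hf.hasSum hmem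

theorem HasFPowerSeriesOnBall.deriv_ofScalars [CompleteSpace 𝕜]
    (hf : HasFPowerSeriesOnBall f (ofScalars 𝕜 c) x r) :
    HasFPowerSeriesOnBall (deriv f) (ofScalars 𝕜 fun n => (n + 1) * c (n + 1)) x r := by
  have hcoeff : (ContinuousLinearMap.apply 𝕜 𝕜 1).compFormalMultilinearSeries
      (ofScalars 𝕜 c).derivSeries = ofScalars 𝕜 fun n => (n + 1) * c (n + 1) := by
    ext1 n
    refine (mkPiRing_coeff_eq _ n).symm.trans ?_
    rw [← mkPiRing_coeff_eq (ofScalars 𝕜 _), coeff_ofScalars]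
    congr 1
    have h := (ofScalars 𝕜 c).derivSeries_coeff_one n
    rw [coeff_ofScalars, nsmul_eq_mul, Nat.cast_succ] at h
    exact h
  have hderiv : (ContinuousLinearMap.apply 𝕜 𝕜 1) ∘ fderiv 𝕜 f = deriv f := by
    ext y; simp
  simpa [hcoeff, hderiv] using
    (ContinuousLinearMap.apply 𝕜 𝕜 1).comp_hasFPowerSeriesOnBall hf.fderiv

end PowerSeries

theorem hasSum_mul_pow_of_hasSum_nat_add {R : Type*} [CommRing R] [TopologicalSpace R]
    [IsTopologicalRing R] {b : ℕ → R} {y s : R} (k : ℕ) (hb : ∀ i < k, b i = 0)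
    (h : HasSum (fun n => b (n + k) * y ^ n) s) : HasSum (fun n => b n * y ^ n) (y ^ k * s) := by
  rw [← hasSum_nat_add_iff' k,
    Finset.sum_eq_zero fun i hi => by simp [hb i (Finset.mem_range.1 hi)], sub_zero]
  simpa [pow_add, mul_left_comm, mul_comm, mul_assoc] using h.mul_left (y ^ k)

theorem le_max_mul_pow_of_add_two_le {a : ℕ → ℝ} {q : ℝ} (hq : 0 < q)
    (h : ∀ n, a (n + 2) ≤ q ^ 2 * a n) : ∀ n, a n ≤ max (a 0) (a 1 / q) * q ^ n
  | 0 => le_max_left _ _ |>.trans_eq (mul_one _).symm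
  | 1 => by simp [← div_le_iff₀ hq]
  | n + 2 => calc
      a (n + 2) ≤ q ^ 2 * a n := h n
      _ ≤ q ^ 2 * (max (a 0) (a 1 / q) * q ^ n) := by
        gcongr; exact le_max_mul_pow_of_add_two_le hq h n
      _ = max (a 0) (a 1 / q) * q ^ (n + 2) := by ring

theorem HasFPowerSeriesOnBall.hypergeometric_ode_of_coeff_recurrence {f : ℝ → ℝ} {c : ℕ → ℝ}
    {r : ℝ≥0∞} (hf : HasFPowerSeriesOnBall f (ofScalars ℝ c) (1 / 2) r)
    (hc : ∀ n : ℕ, (n + 2) * (n + 1) * c (n + 2) = (2 * n + 1) ^ 2 * c n)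
    {t : ℝ} (ht : t ∈ Metric.eball (1 / 2) r) :
    t * (1 - t) * deriv (deriv f) t + (1 - 2 * t) * deriv f t - 1 / 4 * f t = 0 := by
  have hf' := hf.deriv_ofScalars
  have S0 := hf.hasSum_ofScalars ht
  have S1 := hf'.hasSum_ofScalars ht
  have S2 := hf'.deriv_ofScalars.hasSum_ofScalars ht
  set y := t - 1 / 2
  have S1' : HasSum (fun n => n * c n * y ^ n) (y ^ 1 * deriv f t) :=
    hasSum_mul_pow_of_hasSum_nat_add 1 (by simp) (by simpa using S1)
  have S2' : HasSum (fun n => n * (n - 1) * c n * y ^ n) (y ^ 2 * deriv (deriv f) t) := by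
    refine hasSum_mul_pow_of_hasSum_nat_add 2 (fun i hi => by interval_cases i <;> simp) ?_
    convert S2 using 2 with n
    push_cast
    ring
  have hterm : ∀ n : ℕ, (n + 1) * ((↑(n + 1) + 1) * c (n + 1 + 1)) * y ^ n / 4
      - n * (n - 1) * c n * y ^ n - 2 * (n * c n * y ^ n) - c n * y ^ n / 4 = 0 := fun n => by
    push_cast
    linear_combination y ^ n / 4 * hc n
  have S := (((S2.div_const 4).sub S2').sub (S1'.mul_left 2)).sub (S0.div_const 4)
  simp only [hterm, y] at S
  linear_combination S.unique hasSum_zero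

open Nat in
noncomputable def gammaCoeff (n : ℕ) : ℝ :=
  1 / (2 * π ^ ((3 : ℝ) / 2)) * (4 ^ n / n ! * Gamma (n / 2 + 1 / 4) ^ 2)

theorem gammaCoeff_pos (n : ℕ) : 0 < gammaCoeff n := by
  have := Gamma_pos_of_pos (by positivity : (0 : ℝ) < n / 2 + 1 / 4)
  unfold gammaCoeff
  positivity

theorem gammaCoeff_recurrence (n : ℕ) :
    (n + 2) * (n + 1) * gammaCoeff (n + 2) = (2 * n + 1) ^ 2 * gammaCoeff n := by
  have hΓ : Gamma (↑(n + 2) / 2 + 1 / 4) = (n / 2 + 1 / 4) * Gamma (n / 2 + 1 / 4) := by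
    rw [← Gamma_add_one (by positivity)]
    push_cast
    ring_nf
  have hfac : ((n + 2).factorial : ℝ) = (n + 2) * (n + 1) * n.factorial := by
    push_cast [Nat.factorial_succ]
    ring
  unfold gammaCoeff
  rw [hΓ, hfac]
  field_simp
  ring

theorem gammaCoeff_le (n : ℕ) : gammaCoeff n ≤ max (gammaCoeff 0) (gammaCoeff 1 / 2) * 2 ^ n := by
  refine le_max_mul_pow_of_add_two_le two_pos (fun n => ?_) n
  have hn : (2 * n + 1 : ℝ) ^ 2 ≤ 2 ^ 2 * ((n + 2) * (n + 1)) := by nlinarith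
  nlinarith [gammaCoeff_recurrence n, gammaCoeff_pos n, gammaCoeff_pos (n + 2)]

theorem le_radius_ofScalars_gammaCoeff :
    ENNReal.ofReal (1 / 2) ≤ (ofScalars ℝ gammaCoeff).radius := by
  refine le_radius_of_bound _ (max (gammaCoeff 0) (gammaCoeff 1 / 2)) fun n => ?_
  rw [ofScalars_norm, Real.norm_of_nonneg (gammaCoeff_pos n).le, Real.coe_toNNReal _ (by norm_num)]
  calc gammaCoeff n * (1 / 2) ^ n
        ≤ max (gammaCoeff 0) (gammaCoeff 1 / 2) * 2 ^ n * (1 / 2) ^ n := by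
          gcongr; exact gammaCoeff_le n
    _ = max (gammaCoeff 0) (gammaCoeff 1 / 2) := by
        rw [mul_assoc, ← mul_pow]; norm_num

theorem hasFPowerSeriesOnBall_gammaFun :
    HasFPowerSeriesOnBall gammaFun (ofScalars ℝ gammaCoeff) (1 / 2) (ENNReal.ofReal (1 / 2)) := by
  have hr : 0 < ENNReal.ofReal (1 / 2) := ENNReal.ofReal_pos.2 (by norm_num)
  have h := (((ofScalars ℝ gammaCoeff).hasFPowerSeriesOnBall
    (hr.trans_le le_radius_ofScalars_gammaCoeff)).mono hr le_radius_ofScalars_gammaCoeff).comp_sub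
    (1 / 2)
  rw [zero_add] at h
  convert h using 1
  ext t
  rw [gammaFun, ← ofScalarsSum, ofScalars_sum_eq, ← tsum_mul_left]
  refine tsum_congr fun n => ?_
  rw [gammaCoeff, smul_eq_mul]
  ring

/-- `γ` satisfies the hypergeometric equation
`t(1-t)γ'' + (1-2t)γ' - γ/4 = 0` on `|t - 1/2| < 1/2`. -/
theorem gammaFun_hypergeometric_ode (t : ℝ) (ht : |t - 1 / 2| < 1 / 2) :
    t * (1 - t) * deriv (deriv gammaFun) t + (1 - 2 * t) * deriv gammaFun t
      - (1 / 4) * gammaFun t = 0 :=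
  hasFPowerSeriesOnBall_gammaFun.hypergeometric_ode_of_coeff_recurrence gammaCoeff_recurrence
    (edist_lt_ofReal.2 ht)
end

section
/- Define rational numbers v(n) by v(0) = 1 and, for n ≥ 1, v(n) = 2^{n-1}(1·5·9⋯(4n-3))² − (1/2)∑_{m=1}^{n-1} C(2n,2m) v(m) v(n-m). Then v(n) is an integer for all n ≥ 0. -/
/-!
Inductively all `v m` with `m < n` are integers, so it suffices that the sum in the recursion for
`v n` is even. Its terms are symmetric under `m ↦ n - m`, so they cancel in pairs modulo 2, except
for the middle term `m = n / 2` when `n` is even; that term carries the factor `C(2n, n)`, which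
is even.
-/

open Finset

lemma two_dvd_sum_Ico_of_symm {n : ℕ} (g : ℕ → ℤ)
    (hsymm : ∀ m ∈ Ico 1 n, g (n - m) = g m) (hmid : ∀ m ∈ Ico 1 n, 2 * m = n → 2 ∣ g m) :
    2 ∣ ∑ m ∈ Ico 1 n, g m := by
  refine (ZMod.intCast_zmod_eq_zero_iff_dvd _ 2).mp ?_
  rw [Int.cast_sum]
  refine sum_involution (fun m _ => n - m) ?_ ?_ ?_ ?_
  · intro m hm
    rw [hsymm m hm]
    exact CharTwo.add_self_eq_zero _
  · intro m hm hne hfix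
    rw [mem_Ico] at hm
    exact hne <| (ZMod.intCast_zmod_eq_zero_iff_dvd _ 2).mpr (hmid m (mem_Ico.mpr hm) (by omega))
  · intro m hm
    rw [mem_Ico] at hm ⊢
    omega
  · intro m hm
    rw [mem_Ico] at hm
    omega

lemma two_dvd_sum_choose_mul_mul (n : ℕ) (a : ℕ → ℤ) :
    2 ∣ ∑ m ∈ Ico 1 n, ((2 * n).choose (2 * m) : ℤ) * a m * a (n - m) := by
  refine two_dvd_sum_Ico_of_symm _ (fun m hm => ?_) (fun m hm hmid => ?_)
  · rw [mem_Ico] at hm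
    rw [show 2 * (n - m) = 2 * n - 2 * m by omega, Nat.choose_symm (by omega),
      Nat.sub_sub_self hm.2.le, mul_right_comm]
  · rw [mem_Ico] at hm
    subst hmid
    rw [← Nat.centralBinom_eq_two_mul_choose, mul_assoc]
    exact dvd_mul_of_dvd_left (Int.natCast_dvd_natCast.mpr
      (Nat.two_dvd_centralBinom_of_one_le (by omega))) _

/-- If `v(0) = 1` and for `n ≥ 1`,
`v(n) = 2^{n-1}(1·5·9⋯(4n-3))² − (1/2)∑_{m=1}^{n-1} C(2n,2m) v(m) v(n-m)`,
then every `v(n)` is an integer. -/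
theorem v_integer (v : ℕ → ℚ) (h0 : v 0 = 1)
    (hrec : ∀ n : ℕ, 1 ≤ n →
      v n = 2 ^ (n - 1) * (∏ i ∈ Finset.range n, (4 * (i : ℚ) + 1)) ^ 2
        - (1 / 2) * ∑ m ∈ Finset.Ico 1 n, (Nat.choose (2 * n) (2 * m) : ℚ) * v m * v (n - m)) :
    ∀ n : ℕ, ∃ k : ℤ, v n = (k : ℚ) := by
  -- `⌊v ·⌋` names the integer values supplied by the induction hypothesis as a single function.
  suffices h : ∀ n, v n = ⌊v n⌋ from fun n => ⟨_, h n⟩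
  intro n
  induction n using Nat.strong_induction_on with
  | _ n ih =>
  rcases Nat.eq_zero_or_pos n with rfl | hn
  · simp [h0]
  obtain ⟨T, hT⟩ := two_dvd_sum_choose_mul_mul n (fun m => ⌊v m⌋)
  have hsum : ∑ m ∈ Ico 1 n, ((2 * n).choose (2 * m) : ℚ) * v m * v (n - m) = 2 * T := by
    rw [← Int.cast_ofNat, ← Int.cast_mul, ← hT]
    push_cast
    refine sum_congr rfl fun m hm => ?_
    rw [mem_Ico] at hm
    rw [← ih m hm.2, ← ih (n - m) (by omega)]
  have hvn : v n = ((2 ^ (n - 1) * (∏ i ∈ range n, (4 * (i : ℤ) + 1)) ^ 2 - T : ℤ) : ℚ) := by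
    rw [hrec n hn, hsum]
    push_cast
    ring
  rw [hvn, Int.floor_intCast]
end

section
/- Let f(x) = ∑_{j=1}^∞ (a_j/j!) x^j be a formal power series over ℤ with zero constant term, where all a_j are integers. Then for all n, k ≥ 0, the number b_{n,k} = (n!/k!) · [x^n] f(x)^k is an integer. -/
/-!
Call `g` Hurwitz if `n! · [xⁿ] g` is an integer for every `n`. Hurwitz series are closed under
products (the coefficients of a product are binomial convolutions) and derivatives, and a series
with integral constant term is Hurwitz as soon as its derivative is. Since
`(f^(k+1)/(k+1)!)' = (f^k/k!) · f'` and `f(0) = 0`, induction on `k` shows that every divided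
power `f^k/k!` of the Hurwitz series `f` is Hurwitz.
-/

open PowerSeries Nat Finset

namespace PowerSeries

variable {R : Type*}

section CommRing

variable [CommRing R]

def IsHurwitz (g : R⟦X⟧) : Prop :=
  ∀ n, ∃ b : ℤ, (n ! : R) * coeff n g = b

theorem isHurwitz_one : IsHurwitz (1 : R⟦X⟧) := by
  intro n
  refine ⟨if n = 0 then 1 else 0, ?_⟩
  split_ifs with h <;> simp [coeff_one, h]

theorem IsHurwitz.mul {g h : R⟦X⟧} (hg : IsHurwitz g) (hh : IsHurwitz h) :
    IsHurwitz (g * h) := by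
  intro n
  choose b hb using hg
  choose c hc using hh
  refine ⟨∑ p ∈ antidiagonal n, (n.choose p.2 : ℤ) * b p.1 * c p.2, ?_⟩
  rw [coeff_mul, mul_sum]
  push_cast
  refine sum_congr rfl fun ⟨i, j⟩ hij => ?_
  obtain rfl : i + j = n := HasAntidiagonal.mem_antidiagonal.mp hij
  have hfac : ((i + j) ! : R) = (i + j).choose j * i ! * j ! := by
    rw [← Nat.cast_mul, ← Nat.cast_mul, Nat.add_choose_mul_factorial_mul_factorial]
  rw [← hb, ← hc, hfac]
  ring

theorem IsHurwitz.derivative {g : R⟦X⟧} (hg : IsHurwitz g) : IsHurwitz (d⁄dX R g) := by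
  intro n
  obtain ⟨b, hb⟩ := hg (n + 1)
  refine ⟨b, ?_⟩
  rw [coeff_derivative, ← hb, factorial_succ]
  push_cast
  ring

theorem IsHurwitz.of_derivative {g : R⟦X⟧} (hc : ∃ c : ℤ, constantCoeff g = c)
    (hd : IsHurwitz (d⁄dX R g)) : IsHurwitz g := by
  rintro (_ | n)
  · simpa using hc
  · obtain ⟨b, hb⟩ := hd n
    refine ⟨b, ?_⟩
    rw [← hb, coeff_derivative, factorial_succ]
    push_cast
    ring

end CommRing

theorem IsHurwitz.inv_factorial_smul_pow [CommRing R] [Algebra ℚ R] {g : R⟦X⟧}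
    (hg : IsHurwitz g) (h0 : constantCoeff g = 0) (k : ℕ) :
    IsHurwitz ((k ! : ℚ)⁻¹ • g ^ k) := by
  induction k with
  | zero => simpa using isHurwitz_one
  | succ k ih =>
    refine IsHurwitz.of_derivative ⟨0, ?_⟩ ?_
    · simp [h0]
    · have hD : d⁄dX R (((k + 1) ! : ℚ)⁻¹ • g ^ (k + 1)) =
          ((k ! : ℚ)⁻¹ • g ^ k) * d⁄dX R g := by
        rw [map_rat_smul, derivative_pow, Nat.add_sub_cancel, mul_assoc, ← nsmul_eq_mul,
          ← Nat.cast_smul_eq_nsmul ℚ, smul_smul, smul_mul_assoc, factorial_succ]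
        congr 1
        push_cast
        field_simp
      rw [hD]
      exact ih.mul hg.derivative

end PowerSeries

/-- Exponential-formula integrality: if `f(x) = ∑_{j≥1} (a_j/j!) x^j` with all `a_j`
integers (and zero constant term), then `b_{n,k} = (n!/k!)·[xⁿ] f(x)^k` is an integer
for all `n, k ≥ 0`. -/
theorem exp_formula_integrality (a : ℕ → ℤ) (ha0 : a 0 = 0) (f : PowerSeries ℚ)
    (hf : ∀ j : ℕ, PowerSeries.coeff j f = (a j : ℚ) / (Nat.factorial j : ℚ)) :
    ∀ n k : ℕ, ∃ b : ℤ,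
      ((Nat.factorial n : ℚ) / (Nat.factorial k : ℚ)) * PowerSeries.coeff n (f ^ k)
        = (b : ℚ) := by
  have hHurwitz : IsHurwitz f := fun n => ⟨a n, by rw [hf]; field_simp⟩
  have h0 : constantCoeff f = 0 := by
    rw [← coeff_zero_eq_constantCoeff_apply, hf, ha0, Int.cast_zero, zero_div]
  intro n k
  obtain ⟨b, hb⟩ := hHurwitz.inv_factorial_smul_pow h0 k n
  refine ⟨b, ?_⟩
  rw [← hb, coeff_smul, smul_eq_mul]
  ring
end

section
/- Let U(t) = ∑_{j=0}^∞ (u(j)/(2j+1)!) t^j be a formal power series where all u(j) are integers. Then for all 1 ≤ k ≤ n, the quantity r(n,k) = 2^{n-k} · ((2n)!/(2k)!) · [t^{n-k}] U(t)^{2k} is an integer. -/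
/-!
If `A = ∑ aⱼ xʲ/j!` has integral `aⱼ` and `a₀ = 0`, then so has `A^k/k!`: its derivative is
`A^(k-1)/(k-1)! · A'`, and exponential generating functions with integral coefficients are
closed under products (binomial convolution) and under integration. Applied to the odd series
`A(x) = x U(x²)`, whose coefficients are the `u(j)`, the coefficient of `x^(2n)` in
`A^(2k)/(2k)!` is `[t^(n-k)] U(t)^(2k) / (2k)!`, so `(2n)!/(2k)! [t^(n-k)] U^(2k)` is an integer.
-/

open PowerSeries Nat Finset

namespace PowerSeries

variable {R : Type*} [CommRing R]

theorem factorial_mul_coeff_mul (f g : R⟦X⟧) (n : ℕ) :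
    (n ! : R) * coeff n (f * g) = ∑ p ∈ antidiagonal n,
      (n.choose p.2 : R) * ((p.1 ! : R) * coeff p.1 f) * ((p.2 ! : R) * coeff p.2 g) := by
  rw [coeff_mul, mul_sum]
  refine sum_congr rfl fun ⟨i, j⟩ hij => ?_
  rw [← mem_antidiagonal.mp hij, ← add_choose_mul_factorial_mul_factorial]
  push_cast
  ring

theorem factorial_mul_coeff_derivative (f : R⟦X⟧) (n : ℕ) :
    (n ! : R) * coeff n (d⁄dX R f) = ((n + 1)! : R) * coeff (n + 1) f := by
  rw [coeff_derivative, factorial_succ]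
  push_cast
  ring

variable (S : Subring R)

/-- The Hurwitz series over `S`: exponential generating functions `∑ aₙ xⁿ/n!` with all
`aₙ ∈ S`. -/
def hurwitz : Subring R⟦X⟧ where
  carrier := {f | ∀ n, (n ! : R) * coeff n f ∈ S}
  zero_mem' := by simp
  one_mem' n := by rcases n with _ | n <;> simp [coeff_one]
  add_mem' hf hg n := by simpa [mul_add] using add_mem (hf n) (hg n)
  neg_mem' hf n := by simpa using neg_mem (hf n)
  mul_mem' hf hg n := by
    rw [factorial_mul_coeff_mul]
    exact sum_mem fun p _ => mul_mem (mul_mem (natCast_mem S _) (hf p.1)) (hg p.2)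

variable {S}

theorem mem_hurwitz {f : R⟦X⟧} : f ∈ hurwitz S ↔ ∀ n, (n ! : R) * coeff n f ∈ S := Iff.rfl

theorem mem_hurwitz_iff_derivative {f : R⟦X⟧} :
    f ∈ hurwitz S ↔ constantCoeff f ∈ S ∧ d⁄dX R f ∈ hurwitz S := by
  simp only [mem_hurwitz, factorial_mul_coeff_derivative]
  refine ⟨fun h => ⟨by simpa using h 0, fun n => h (n + 1)⟩, fun ⟨h0, hd⟩ n => ?_⟩
  rcases n with _ | n
  · simp [h0]
  · exact hd n

theorem inv_factorial_smul_pow_mem_hurwitz [Algebra ℚ R] {A : R⟦X⟧} (hA : A ∈ hurwitz S)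
    (hA0 : constantCoeff A = 0) (k : ℕ) : (k ! : ℚ)⁻¹ • A ^ k ∈ hurwitz S := by
  induction k with
  | zero => simp
  | succ k ih =>
    rw [mem_hurwitz_iff_derivative]
    refine ⟨by simp [hA0], ?_⟩
    have hd : d⁄dX R (((k + 1)! : ℚ)⁻¹ • A ^ (k + 1)) = ((k ! : ℚ)⁻¹ • A ^ k) * d⁄dX R A := by
      rw [map_rat_smul, derivative_pow, factorial_succ, Nat.add_sub_cancel, mul_assoc,
        ← nsmul_eq_mul, ← Nat.cast_smul_eq_nsmul ℚ, smul_smul, smul_mul_assoc]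
      congr 1
      push_cast
      field_simp
    rw [hd]
    exact mul_mem ih (mem_hurwitz_iff_derivative.mp hA).2

theorem X_mul_expand_two_mem_hurwitz {U : R⟦X⟧} (hU : ∀ j, ((2 * j + 1)! : R) * coeff j U ∈ S) :
    X * expand 2 two_ne_zero U ∈ hurwitz S
  | 0 => by simp
  | m + 1 => by
    rw [coeff_succ_X_mul, coeff_expand]
    obtain ⟨j, rfl | rfl⟩ := Nat.even_or_odd' m
    · simpa using hU j
    · simp [Nat.not_two_dvd_bit1]

theorem coeff_X_mul_expand_two_pow (U : R⟦X⟧) {n k : ℕ} (hkn : k ≤ n) :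
    coeff (2 * n) ((X * expand 2 two_ne_zero U) ^ (2 * k)) = coeff (n - k) (U ^ (2 * k)) := by
  rw [mul_pow, ← map_pow, coeff_X_pow_mul', if_pos (by omega),
    show 2 * n - 2 * k = 2 * (n - k) by omega, coeff_expand_mul]

end PowerSeries

/-- If `U(t) = ∑_{j≥0} (u(j)/(2j+1)!) t^j` with all `u(j)` integers, then for
`1 ≤ k ≤ n` the quantity `r(n,k) = 2^{n-k}·((2n)!/(2k)!)·[t^{n-k}] U(t)^{2k}` is an
integer. -/
theorem r_integer (u : ℕ → ℤ) (U : PowerSeries ℚ)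
    (hU : ∀ j : ℕ, PowerSeries.coeff j U = (u j : ℚ) / (Nat.factorial (2 * j + 1) : ℚ)) :
    ∀ n k : ℕ, 1 ≤ k → k ≤ n → ∃ r : ℤ,
      (2 : ℚ) ^ (n - k) * ((Nat.factorial (2 * n) : ℚ) / (Nat.factorial (2 * k) : ℚ))
          * PowerSeries.coeff (n - k) (U ^ (2 * k)) = (r : ℚ) := by
  intro n k _ hkn
  have hA : X * expand 2 two_ne_zero U ∈ hurwitz (⊥ : Subring ℚ) :=
    X_mul_expand_two_mem_hurwitz fun j => Subring.mem_bot.mpr ⟨u j, by rw [hU]; field_simp⟩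
  have hr := inv_factorial_smul_pow_mem_hurwitz hA (by simp) (2 * k) (2 * n)
  rw [coeff_smul, coeff_X_mul_expand_two_pow U hkn] at hr
  obtain ⟨r, hr⟩ := Subring.mem_bot.mp (mul_mem (pow_mem (natCast_mem _ 2) (n - k)) hr)
  exact ⟨r, by rw [hr]; push_cast; ring⟩
end
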